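/- Let B be a finite Blaschke product with B(0) = 0 and let H^2(B) be the closed linear span of {B^m : m ∈ ℕ} in H^2(𝕋). For φ ∈ H^2, the set {B^m φ : m ∈ ℕ} is orthonormal in H^2 if and only if for every f ∈ H^2(B), ‖φ·f‖_2 = ‖f‖_2 (in particular φ multiplies H^2(B) isometrically into H^2). -/

import Mathlib

open MeasureTheory Complex ComplexConjugate
open scoped ENNReal

noncomputable section

instance : Fact ((0:ℝ) < 1) := ⟨zero_lt_one⟩

abbrev T1 := AddCircle (1:ℝ)

def zfun : T1 → ℂ := fun t => fourier 1 t

def hInner (f g : T1 → ℂ) : ℂ := ∫ t, f t * conj (g t)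

def MemHp (p : ℝ≥0∞) (f : T1 → ℂ) : Prop :=
  MemLp f p volume ∧ ∀ n : ℤ, n < 0 → fourierCoeff f n = 0

def blaschke {n : ℕ} (α : Fin n → ℂ) : T1 → ℂ :=
  fun t => ∏ i, (zfun t - α i) / (1 - conj (α i) * zfun t)

def MemH2B (B f : T1 → ℂ) : Prop :=
  MemHp 2 f ∧ ∀ ε : ℝ, 0 < ε → ∃ c : ℕ →₀ ℂ,
    eLpNorm (fun t => f t - ∑ m ∈ c.support, c m * (B t) ^ m) 2 volume < ENNReal.ofReal ε

/-!
Put `u_m = B^m` and `v_m = B^m φ` in `L²(𝕋)`. Since `|B| = 1` on `𝕋`,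
`⟪u_m, u_k⟫ = ∫ B^(k-m)`, which by the mean value property (`B` is holomorphic on a
neighbourhood of the closed disc and `B(0) = 0`) is `δ_{mk}`. By polarization, `(v_m)` has the
same Gram matrix as `(u_m)` iff `‖∑ c_m v_m‖ = ‖∑ c_m u_m‖` for all finitely supported `c`,
i.e. iff multiplication by `φ` is isometric on the `B`-polynomials. Such an isometry passes to
their `L²`-closure `H²(B)`: Fatou's lemma along an a.e. convergent subsequence gives
`‖φ f‖ ≤ ‖f‖`, and applying this to `q - f` for a `B`-polynomial `q` close to `f` gives the
reverse inequality.
-/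

open Metric Filter Topology Real Finsupp
open scoped InnerProductSpace

section Gram

variable {ι 𝕜 E : Type*} [RCLike 𝕜] [NormedAddCommGroup E] [InnerProductSpace 𝕜 E]

lemma inner_linearCombination_linearCombination (v : ι → E) (c d : ι →₀ 𝕜) :
    ⟪linearCombination 𝕜 v c, linearCombination 𝕜 v d⟫_𝕜 =
      ∑ i ∈ c.support, ∑ j ∈ d.support, conj (c i) * d j * ⟪v i, v j⟫_𝕜 := by
  simp only [linearCombination_apply, Finsupp.sum]
  rw [sum_inner]
  simp_rw [inner_smul_left, inner_sum, inner_smul_right, Finset.mul_sum, mul_assoc]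

theorem norm_linearCombination_eq_iff_inner_eq (u v : ι → E) :
    (∀ c : ι →₀ 𝕜, ‖linearCombination 𝕜 v c‖ = ‖linearCombination 𝕜 u c‖) ↔
      ∀ i j, ⟪v i, v j⟫_𝕜 = ⟪u i, u j⟫_𝕜 := by
  constructor
  · intro h i j
    have hadd (a : 𝕜) : ‖v i + a • v j‖ = ‖u i + a • u j‖ := by
      have := h (single i 1 + single j a)
      simpa only [map_add, linearCombination_single, one_smul] using this
    have hsub (a : 𝕜) : ‖v i - a • v j‖ = ‖u i - a • u j‖ := by
      simpa [sub_eq_add_neg] using hadd (-a)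
    have h1 := hadd 1
    have h2 := hsub 1
    simp only [one_smul] at h1 h2
    rw [inner_eq_sum_norm_sq_div_four, inner_eq_sum_norm_sq_div_four (u i), h1, h2, hadd, hsub]
  · intro h c
    have hsq : ‖linearCombination 𝕜 v c‖ ^ 2 = ‖linearCombination 𝕜 u c‖ ^ 2 := by
      simp only [@norm_sq_eq_re_inner 𝕜, inner_linearCombination_linearCombination, h]
    exact (pow_left_inj₀ (norm_nonneg _) (norm_nonneg _) two_ne_zero).1 hsq

end Gram

section LpCombination

variable {α 𝕜 E ι : Type*} [MeasurableSpace α] {μ : Measure α} [RCLike 𝕜]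
  [NormedAddCommGroup E] [NormedSpace 𝕜 E] {p : ℝ≥0∞}

lemma coeFn_linearCombination_toLp {w : ι → α → E} (hw : ∀ i, MemLp (w i) p μ)
    (c : ι →₀ 𝕜) :
    ⇑(linearCombination 𝕜 (fun i ↦ (hw i).toLp (w i)) c) =ᵐ[μ] linearCombination 𝕜 w c := by
  simp only [linearCombination_apply, Finsupp.sum]
  filter_upwards [Lp.coeFn_fun_finsetSum c.support fun i ↦ c i • (hw i).toLp (w i),
    (eventually_all_finset c.support).2 fun i _ ↦ Lp.coeFn_smul (c i) ((hw i).toLp (w i)),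
    (eventually_all_finset c.support).2 fun i _ ↦ (hw i).coeFn_toLp] with x hsum hsmul htoLp
  rw [hsum, Finset.sum_apply]
  refine Finset.sum_congr rfl fun i hi ↦ ?_
  rw [hsmul i hi, Pi.smul_apply, htoLp i hi, Pi.smul_apply]

lemma eLpNorm_linearCombination {w : ι → α → E} (hw : ∀ i, MemLp (w i) p μ)
    (c : ι →₀ 𝕜) :
    eLpNorm (linearCombination 𝕜 w c) p μ =
      ENNReal.ofReal ‖linearCombination 𝕜 (fun i ↦ (hw i).toLp (w i)) c‖ := by
  rw [Lp.norm_def, ENNReal.ofReal_toReal (Lp.eLpNorm_ne_top _),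
    eLpNorm_congr_ae (coeFn_linearCombination_toLp hw c)]

lemma forall_mem_span_eLpNorm_mul_eq_iff [Fact (1 ≤ p)] {w : ι → α → 𝕜}
    (hw : ∀ i, MemLp (w i) p μ) {φ : α → 𝕜} (hφw : ∀ i, MemLp (φ * w i) p μ) :
    (∀ q ∈ Submodule.span 𝕜 (Set.range w), eLpNorm (φ * q) p μ = eLpNorm q p μ) ↔
      ∀ c : ι →₀ 𝕜, ‖linearCombination 𝕜 (fun i ↦ (hφw i).toLp (φ * w i)) c‖ =
        ‖linearCombination 𝕜 (fun i ↦ (hw i).toLp (w i)) c‖ := by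
  rw [← range_linearCombination]
  simp only [LinearMap.mem_range, forall_exists_index, forall_apply_eq_imp_iff]
  refine forall_congr' fun c ↦ ?_
  have hmul : φ * linearCombination 𝕜 w c = linearCombination 𝕜 (fun i ↦ φ * w i) c :=
    apply_linearCombination 𝕜 (LinearMap.mulLeft 𝕜 φ) w c
  rw [hmul, eLpNorm_linearCombination hφw, eLpNorm_linearCombination hw,
    ENNReal.ofReal_eq_ofReal_iff (norm_nonneg _) (norm_nonneg _)]

lemma inner_toLp {f g : α → 𝕜} (hf : MemLp f 2 μ) (hg : MemLp g 2 μ) :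
    ⟪hf.toLp f, hg.toLp g⟫_𝕜 = ∫ x, conj (f x) * g x ∂μ := by
  rw [L2.inner_def]
  refine integral_congr_ae ?_
  filter_upwards [hf.coeFn_toLp, hg.coeFn_toLp] with x hfx hgx
  rw [hfx, hgx, RCLike.inner_apply, mul_comm]

end LpCombination

section Approximation

variable {α E : Type*} [MeasurableSpace α] {μ : Measure α} [NormedRing E] {p : ℝ≥0∞}
  {φ f : α → E}

lemma exists_seq_tendsto_eLpNorm_sub {P : Set (α → E)}
    (hfP : ∀ ε : ℝ≥0∞, 0 < ε → ∃ q ∈ P, eLpNorm (f - q) p μ < ε) :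
    ∃ u : ℕ → α → E, (∀ i, u i ∈ P) ∧
      Tendsto (fun i ↦ eLpNorm (u i - f) p μ) atTop (𝓝 0) := by
  choose u hu hlt using fun i : ℕ ↦ hfP ((i + 1 : ℕ) : ℝ≥0∞)⁻¹ (by simp)
  refine ⟨u, hu, tendsto_of_tendsto_of_tendsto_of_le_of_le tendsto_const_nhds
    (ENNReal.tendsto_inv_nat_nhds_zero.comp (tendsto_add_atTop_nat 1)) (fun _ ↦ zero_le)
    fun i ↦ ?_⟩
  rw [eLpNorm_sub_comm]
  exact (hlt i).le

lemma eLpNorm_mul_le_of_tendsto (hp : 1 ≤ p) (hφ : AEStronglyMeasurable φ μ)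
    (hf : AEStronglyMeasurable f μ) {u : ℕ → α → E} (hu : ∀ i, AEStronglyMeasurable (u i) μ)
    (hiso : ∀ i, eLpNorm (φ * u i) p μ = eLpNorm (u i) p μ)
    (hlim : Tendsto (fun i ↦ eLpNorm (u i - f) p μ) atTop (𝓝 0)) :
    eLpNorm (φ * f) p μ ≤ eLpNorm f p μ := by
  obtain ⟨ns, hns, hae⟩ :=
    (tendstoInMeasure_of_tendsto_eLpNorm (by positivity) hu hf hlim).exists_seq_tendsto_ae
  have hlim' := hlim.comp hns.tendsto_atTop
  calc eLpNorm (φ * f) p μ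
      ≤ atTop.liminf fun i ↦ eLpNorm (φ * u (ns i)) p μ :=
        Lp.eLpNorm_lim_le_liminf_eLpNorm (fun i ↦ hφ.mul (hu _)) _ <| by
          filter_upwards [hae] with x hx using hx.const_mul (φ x)
    _ = atTop.liminf fun i ↦ eLpNorm (u (ns i)) p μ := by simp_rw [hiso]
    _ ≤ atTop.liminf fun i ↦ eLpNorm f p μ + eLpNorm (u (ns i) - f) p μ :=
        liminf_le_liminf <| .of_forall fun i ↦ by
          simpa using eLpNorm_add_le hf ((hu _).sub hf) hp
    _ = eLpNorm f p μ := by simpa using (hlim'.const_add (eLpNorm f p μ)).liminf_eq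

theorem eLpNorm_mul_eq_of_forall_exists_eLpNorm_sub_lt (hp : 1 ≤ p)
    (hφ : AEStronglyMeasurable φ μ) (hf : AEStronglyMeasurable f μ) {P : AddSubgroup (α → E)}
    (hP : ∀ q ∈ P, AEStronglyMeasurable q μ)
    (hiso : ∀ q ∈ P, eLpNorm (φ * q) p μ = eLpNorm q p μ)
    (hfP : ∀ ε : ℝ≥0∞, 0 < ε → ∃ q ∈ P, eLpNorm (f - q) p μ < ε) :
    eLpNorm (φ * f) p μ = eLpNorm f p μ := by
  have hle : ∀ g, AEStronglyMeasurable g μ →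
      (∀ ε : ℝ≥0∞, 0 < ε → ∃ q ∈ P, eLpNorm (g - q) p μ < ε) →
      eLpNorm (φ * g) p μ ≤ eLpNorm g p μ := by
    intro g hg hgP
    obtain ⟨u, hu, hlim⟩ := exists_seq_tendsto_eLpNorm_sub hgP
    exact eLpNorm_mul_le_of_tendsto hp hφ hg (fun i ↦ hP _ (hu i)) (fun i ↦ hiso _ (hu i)) hlim
  refine le_antisymm (hle f hf hfP) (ENNReal.le_of_forall_pos_le_add fun ε hε _ ↦ ?_)
  obtain ⟨q, hq, hfq⟩ := hfP (ε / 2) (by simpa using hε.ne')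
  have hqf : eLpNorm (φ * (q - f)) p μ ≤ eLpNorm (q - f) p μ := by
    refine hle _ ((hP q hq).sub hf) fun δ hδ ↦ ?_
    obtain ⟨r, hr, hfr⟩ := hfP δ hδ
    exact ⟨q - r, P.sub_mem hq hr, by rwa [sub_sub_sub_cancel_left, eLpNorm_sub_comm]⟩
  calc eLpNorm f p μ
      ≤ eLpNorm q p μ + eLpNorm (f - q) p μ := by
        simpa using eLpNorm_add_le (hP q hq) (hf.sub (hP q hq)) hp
    _ = eLpNorm (φ * f + φ * (q - f)) p μ + eLpNorm (f - q) p μ := by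
        rw [← mul_add, add_sub_cancel, hiso q hq]
    _ ≤ eLpNorm (φ * f) p μ + eLpNorm (f - q) p μ + eLpNorm (f - q) p μ := by
        gcongr
        refine (eLpNorm_add_le (hφ.mul hf) (hφ.mul ((hP q hq).sub hf)) hp).trans ?_
        rw [eLpNorm_sub_comm f q]
        gcongr
    _ ≤ eLpNorm (φ * f) p μ + ε := by
        rw [add_assoc]
        gcongr
        calc eLpNorm (f - q) p μ + eLpNorm (f - q) p μ ≤ ε / 2 + ε / 2 := by gcongr
          _ = ε := ENNReal.add_halves _

end Approximation

section Circle

lemma zfun_coe (x : ℝ) : zfun x = circleMap 0 1 (2 * π * x) := by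
  rw [zfun, fourier_coe_apply, circleMap_zero]
  push_cast
  ring_nf

lemma norm_zfun (t : T1) : ‖zfun t‖ = 1 := Circle.norm_coe _

lemma continuous_zfun : Continuous zfun := (fourier 1).continuous

lemma integral_comp_zfun {E : Type*} [NormedAddCommGroup E] [NormedSpace ℝ E] (F : ℂ → E) :
    ∫ t : T1, F (zfun t) = circleAverage F 0 1 := by
  rw [← AddCircle.intervalIntegral_preimage 1 0, zero_add, circleAverage_def]
  simp_rw [zfun_coe]
  rw [intervalIntegral.integral_comp_mul_left (fun θ ↦ F (circleMap 0 1 θ)) (by positivity),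
    mul_zero, mul_one]

lemma integral_comp_zfun_eq_zero {E : Type*} [NormedAddCommGroup E] [NormedSpace ℂ E]
    [CompleteSpace E] {F : ℂ → E} (hF : DifferentiableOn ℂ F (closedBall 0 1)) (h0 : F 0 = 0) :
    ∫ t : T1, F (zfun t) = 0 := by
  rw [integral_comp_zfun, ← h0]
  simpa using (hF.diffContOnCl_ball (c := 0) (R := |1|) (by simp)).circleAverage

end Circle
section Blaschke

variable {n : ℕ} {α : Fin n → ℂ}

def blaschkeProduct (α : Fin n → ℂ) (z : ℂ) : ℂ :=
  ∏ i, (z - α i) / (1 - conj (α i) * z)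

lemma one_sub_conj_mul_ne_zero {a z : ℂ} (ha : ‖a‖ < 1) (hz : ‖z‖ ≤ 1) :
    1 - conj a * z ≠ 0 := by
  intro h
  have h1 : ‖conj a * z‖ = 1 := by rw [← sub_eq_zero.1 h, norm_one]
  rw [norm_mul, Complex.norm_conj] at h1
  nlinarith [norm_nonneg a, norm_nonneg z]

lemma differentiableOn_blaschkeProduct (hα : ∀ i, ‖α i‖ < 1) :
    DifferentiableOn ℂ (blaschkeProduct α) (closedBall 0 1) := by
  refine DifferentiableOn.fun_finsetProd fun i _ ↦ ?_
  exact (differentiableOn_id.sub_const _).div (by fun_prop)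
    fun z hz ↦ one_sub_conj_mul_ne_zero (hα i) (mem_closedBall_zero_iff.1 hz)

lemma blaschkeProduct_zero {i : Fin n} (hi : α i = 0) : blaschkeProduct α 0 = 0 :=
  Finset.prod_eq_zero (Finset.mem_univ i) (by simp [hi])

lemma norm_blaschkeFactor {a z : ℂ} (ha : ‖a‖ < 1) (hz : ‖z‖ = 1) :
    ‖(z - a) / (1 - conj a * z)‖ = 1 := by
  have hden : 1 - conj a * z = z * conj (z - a) := by
    rw [map_sub, mul_sub, Complex.mul_conj', hz]
    push_cast
    ring
  have hza : z - a ≠ 0 := sub_ne_zero.2 fun h ↦ by rw [h] at hz; linarith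
  rw [hden, norm_div, norm_mul, hz, one_mul, Complex.norm_conj,
    div_self (norm_ne_zero_iff.2 hza)]

lemma norm_blaschke (hα : ∀ i, ‖α i‖ < 1) (t : T1) : ‖blaschke α t‖ = 1 := by
  rw [blaschke, norm_prod]
  exact Finset.prod_eq_one fun i _ ↦ norm_blaschkeFactor (hα i) (norm_zfun t)

end Blaschke

def holomorphicBoundaryValues : Submodule ℂ (T1 → ℂ) where
  carrier := {q | ∃ F : ℂ → ℂ, DifferentiableOn ℂ F (closedBall 0 1) ∧ q = F ∘ zfun}
  add_mem' := by
    rintro _ _ ⟨F, hF, rfl⟩ ⟨G, hG, rfl⟩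
    exact ⟨F + G, hF.add hG, rfl⟩
  zero_mem' := ⟨0, differentiableOn_const 0, rfl⟩
  smul_mem' := by
    rintro c _ ⟨F, hF, rfl⟩
    exact ⟨c • F, hF.const_smul c, rfl⟩

namespace holomorphicBoundaryValues

variable {q : T1 → ℂ}

lemma continuous (hq : q ∈ holomorphicBoundaryValues) : Continuous q := by
  obtain ⟨F, hF, rfl⟩ := hq
  exact hF.continuousOn.comp_continuous continuous_zfun fun t ↦ by simp [norm_zfun]

lemma fourierCoeff_eq_zero (hq : q ∈ holomorphicBoundaryValues) {k : ℤ} (hk : k < 0) :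
    fourierCoeff q k = 0 := by
  obtain ⟨F, hF, rfl⟩ := hq
  obtain ⟨m, hm⟩ : ∃ m : ℕ, -k = ((m + 1 : ℕ) : ℤ) := ⟨(-k - 1).toNat, by omega⟩
  have hfourier (t : T1) : (fourier (-k) t : ℂ) = zfun t ^ (m + 1) := by
    rw [hm, fourier_apply, natCast_zsmul, AddCircle.toCircle_nsmul, Circle.coe_pow, zfun,
      fourier_one]
  rw [fourierCoeff, AddCircle.integral_haarAddCircle]
  simp_rw [hfourier, smul_eq_mul, Function.comp_apply]
  rw [integral_comp_zfun_eq_zero (F := fun z ↦ z ^ (m + 1) * F z)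
    ((differentiableOn_pow _).mul hF) (by simp), smul_zero]

lemma memHp (hq : q ∈ holomorphicBoundaryValues) (p : ℝ≥0∞) [Fact (1 ≤ p)] : MemHp p q :=
  ⟨ContinuousMap.memLp (p := p) volume ℂ ⟨q, continuous hq⟩,
    fun _ hk ↦ fourierCoeff_eq_zero hq hk⟩

end holomorphicBoundaryValues

section BlaschkePolynomials

variable {n : ℕ} {α : Fin n → ℂ}

def blaschkePolynomials (α : Fin n → ℂ) : Submodule ℂ (T1 → ℂ) :=
  Submodule.span ℂ (Set.range fun m : ℕ ↦ blaschke α ^ m)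

lemma mem_blaschkePolynomials_iff {q : T1 → ℂ} :
    q ∈ blaschkePolynomials α ↔
      ∃ c : ℕ →₀ ℂ, ∀ t, q t = ∑ m ∈ c.support, c m * blaschke α t ^ m := by
  rw [blaschkePolynomials, ← range_linearCombination]
  refine exists_congr fun c ↦ ?_
  rw [eq_comm, funext_iff]
  simp [linearCombination_apply, Finsupp.sum]

lemma blaschkePolynomials_le (hα : ∀ i, ‖α i‖ < 1) :
    blaschkePolynomials α ≤ holomorphicBoundaryValues :=
  Submodule.span_le.2 <| Set.range_subset_iff.2 fun m ↦
    ⟨blaschkeProduct α ^ m, (differentiableOn_blaschkeProduct hα).pow m, rfl⟩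

lemma memHp_blaschke_pow (hα : ∀ i, ‖α i‖ < 1) (p : ℝ≥0∞) [Fact (1 ≤ p)] (m : ℕ) :
    MemHp p (blaschke α ^ m) :=
  holomorphicBoundaryValues.memHp (blaschkePolynomials_le hα (Submodule.subset_span ⟨m, rfl⟩)) p

lemma memH2B_of_mem_blaschkePolynomials (hα : ∀ i, ‖α i‖ < 1) {q : T1 → ℂ}
    (hq : q ∈ blaschkePolynomials α) : MemH2B (blaschke α) q := by
  refine ⟨holomorphicBoundaryValues.memHp (blaschkePolynomials_le hα hq) 2, fun ε hε ↦ ?_⟩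
  obtain ⟨c, hc⟩ := mem_blaschkePolynomials_iff.1 hq
  refine ⟨c, ?_⟩
  simpa [hc] using hε

lemma exists_eLpNorm_sub_lt_of_memH2B {f : T1 → ℂ} (hf : MemH2B (blaschke α) f)
    {ε : ℝ≥0∞} (hε : 0 < ε) : ∃ q ∈ blaschkePolynomials α, eLpNorm (f - q) 2 volume < ε := by
  obtain ⟨r, -, hr0, hrε⟩ := ENNReal.lt_iff_exists_real_btwn.1 hε
  obtain ⟨c, hc⟩ := hf.2 r (ENNReal.ofReal_pos.1 hr0)
  exact ⟨fun t ↦ ∑ m ∈ c.support, c m * blaschke α t ^ m,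
    mem_blaschkePolynomials_iff.2 ⟨c, fun _ ↦ rfl⟩, hc.trans hrε⟩

lemma integral_blaschke_zpow (hα : ∀ i, ‖α i‖ < 1) {i : Fin n} (hi : α i = 0) (j : ℤ) :
    ∫ t, blaschke α t ^ j = if j = 0 then 1 else 0 := by
  have hnat (m : ℕ) (hm : m ≠ 0) : ∫ t, blaschke α t ^ m = 0 :=
    integral_comp_zfun_eq_zero ((differentiableOn_blaschkeProduct hα).pow m)
      (by simp [blaschkeProduct_zero hi, hm])
  rcases eq_or_ne j 0 with rfl | hj
  · simp [Measure.real, AddCircle.measure_univ]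
  rw [if_neg hj]
  obtain ⟨m, rfl | rfl⟩ := Int.eq_nat_or_neg j
  · exact_mod_cast hnat m (by omega)
  · have hconj (t : T1) : blaschke α t ^ (-(m : ℤ)) = conj (blaschke α t ^ m) := by
      rw [zpow_neg, zpow_natCast, map_pow, ← Complex.inv_eq_conj (norm_blaschke hα t), inv_pow]
    simp_rw [hconj, integral_conj, hnat m (by omega), map_zero]

theorem orthonormal_blaschke_pow (hα : ∀ i, ‖α i‖ < 1) {i : Fin n} (hi : α i = 0) :
    Orthonormal ℂ fun m : ℕ ↦ (memHp_blaschke_pow hα 2 m).1.toLp (blaschke α ^ m) := by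
  rw [orthonormal_iff_ite]
  intro m k
  have hpt (t : T1) : conj ((blaschke α ^ m) t) * (blaschke α ^ k) t =
      blaschke α t ^ ((k : ℤ) - m) := by
    have hB : blaschke α t ≠ 0 := norm_ne_zero_iff.1 (by simp [norm_blaschke hα t])
    rw [Pi.pow_apply, Pi.pow_apply, map_pow, ← Complex.inv_eq_conj (norm_blaschke hα t),
      zpow_sub₀ hB, zpow_natCast, zpow_natCast, inv_pow, div_eq_inv_mul]
  simp_rw [inner_toLp, hpt, integral_blaschke_zpow hα hi, sub_eq_zero, Nat.cast_inj, eq_comm]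

end BlaschkePolynomials

theorem B_inner_iff_isometric_on_H2B (n : ℕ) (hn : 0 < n) (α : Fin n → ℂ)
    (hα : ∀ i, ‖α i‖ < 1) (hα0 : α ⟨0, hn⟩ = 0)
    (φ : T1 → ℂ) (hφ : MemHp 2 φ) :
    (∀ m k : ℕ, hInner (fun t => (blaschke α t) ^ m * φ t)
        (fun t => (blaschke α t) ^ k * φ t) = if m = k then 1 else 0) ↔
    (∀ f : T1 → ℂ, MemH2B (blaschke α) f →
      eLpNorm (fun t => φ t * f t) 2 volume = eLpNorm f 2 volume) := by
  have hw (m : ℕ) := (memHp_blaschke_pow hα 2 m).1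
  have hφw (m : ℕ) : MemLp (φ * blaschke α ^ m) 2 volume :=
    (memHp_blaschke_pow hα ⊤ m).1.mul hφ.1
  set U := fun m : ℕ ↦ (hw m).toLp (blaschke α ^ m)
  set V := fun m : ℕ ↦ (hφw m).toLp (φ * blaschke α ^ m)
  have hInner_eq (m k : ℕ) : hInner (fun t ↦ blaschke α t ^ m * φ t)
      (fun t ↦ blaschke α t ^ k * φ t) = ⟪V k, V m⟫_ℂ := by
    rw [hInner, inner_toLp]
    congr 1 with t
    simp only [Pi.mul_apply, Pi.pow_apply, map_mul]
    ring
  have hU : ∀ k m, ⟪U k, U m⟫_ℂ = if k = m then 1 else 0 :=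
    orthonormal_iff_ite.1 (orthonormal_blaschke_pow hα hα0)
  have hgram : (∀ m k : ℕ, hInner (fun t ↦ blaschke α t ^ m * φ t)
      (fun t ↦ blaschke α t ^ k * φ t) = if m = k then 1 else 0) ↔
        ∀ k m, ⟪V k, V m⟫_ℂ = ⟪U k, U m⟫_ℂ :=
    forall_comm.trans <| forall₂_congr fun k m ↦ by simp only [hInner_eq, hU, eq_comm (a := m)]
  rw [hgram, ← norm_linearCombination_eq_iff_inner_eq U V,
    ← forall_mem_span_eLpNorm_mul_eq_iff hw hφw]
  refine ⟨fun hiso f hf ↦ ?_, fun hiso q hq ↦ hiso q (memH2B_of_mem_blaschkePolynomials hα hq)⟩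
  exact eLpNorm_mul_eq_of_forall_exists_eLpNorm_sub_lt
    (P := (blaschkePolynomials α).toAddSubgroup) one_le_two hφ.1.1 hf.1.1.1
    (fun q hq ↦ (memH2B_of_mem_blaschkePolynomials hα hq).1.1.1) hiso
    fun ε hε ↦ exists_eLpNorm_sub_lt_of_memH2B hf hε
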